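/- For every integer m ≥ 1, reals δ₀, δ₁ > -m, integers 3 ≤ τ' < k, the product over i = 1 to m of S_{k,i-1}(δ₁)/S_{k,i-1}(δ₀) lies between e^{-6m/τ'}·((2m+δ₁)/(2m+δ₀))^m and e^{6m/τ'}·((2m+δ₁)/(2m+δ₀))^m. -/

import Mathlib

/-! Writing `A = 2m + δ₁`, `B = 2m + δ₀` and `c = 2m - j`, each factor is
`(A k - c) / (B k - c) = (A / B) · (k - c/A) / (k - c/B)`, and `0 ≤ c/A, c/B ≤ 2` because
`A, B > m`. Hence every factor is within `k / (k - 2)` of `A / B` in ratio, and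
`k / (k - 2) = 1 + 2 / (k - 2) ≤ 1 + 6 / τ' ≤ exp (6 / τ')` since `τ' + 1 ≤ k`. -/

open Finset

/-- `S_{k,j}(δ) = (2m+δ)k - 2m + j`. -/
noncomputable def Spa (m k j : ℕ) (δ : ℝ) : ℝ :=
  (2 * m + δ) * k - 2 * m + j

open Real

lemma mul_sub_div_mul_sub {a b c k : ℝ} (ha : a ≠ 0) (hb : b ≠ 0) :
    (a * k - c) / (b * k - c) = a / b * ((k - c / a) / (k - c / b)) := by
  rw [sub_div' ha, sub_div' hb, div_div_div_eq, mul_comm k a, mul_comm k b]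
  field_simp

lemma sub_two_div_le_sub_div_sub {k u v : ℝ} (hk : 2 < k) (hu : u ≤ 2) (hv₀ : 0 ≤ v)
    (hv : v ≤ 2) : (k - 2) / k ≤ (k - u) / (k - v) := by
  rw [div_le_div_iff₀ (by linarith) (by linarith)]
  nlinarith

lemma sub_div_sub_le_div_sub_two {k u v : ℝ} (hk : 2 < k) (hu : 0 ≤ u) (hv : v ≤ 2) :
    (k - u) / (k - v) ≤ k / (k - 2) := by
  rw [div_le_div_iff₀ (by linarith) (by linarith)]
  nlinarith

lemma div_sub_two_le_exp {k τ : ℝ} (hτ : 3 / 2 ≤ τ) (hk : τ + 1 ≤ k) :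
    k / (k - 2) ≤ exp (6 / τ) := by
  have h6 : 6 / τ * τ = 6 := div_mul_cancel₀ _ (by positivity)
  have h6₀ : 0 ≤ 6 / τ := by positivity
  calc k / (k - 2) ≤ 1 + 6 / τ := by
        rw [div_le_iff₀ (by linarith)]
        nlinarith [mul_le_mul_of_nonneg_left (by linarith : τ - 1 ≤ k - 2) h6₀]
    _ ≤ exp (6 / τ) := by linarith [add_one_le_exp (6 / τ)]

section

variable {m k j : ℕ} {δ δ₀ δ₁ : ℝ}

lemma Spa_div_Spa_eq (hδ₀ : -(m : ℝ) < δ₀) (hδ₁ : -(m : ℝ) < δ₁) :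
    Spa m k j δ₁ / Spa m k j δ₀ = (2 * m + δ₁) / (2 * m + δ₀) *
      ((k - (2 * m - j) / (2 * m + δ₁)) / (k - (2 * m - j) / (2 * m + δ₀))) := by
  rw [← mul_sub_div_mul_sub (by linarith) (by linarith)]
  simp only [Spa]
  ring_nf

lemma sub_div_nonneg_of_le (hδ : -(m : ℝ) < δ) (hj : j ≤ 2 * m) :
    0 ≤ (2 * m - j : ℝ) / (2 * m + δ) := by
  have hj' : (j : ℝ) ≤ 2 * m := by exact_mod_cast hj
  exact div_nonneg (by linarith) (by linarith)

lemma sub_div_le_two (hδ : -(m : ℝ) < δ) :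
    (2 * m - j : ℝ) / (2 * m + δ) ≤ 2 := by
  rw [div_le_iff₀ (by linarith)]
  linarith [j.cast_nonneg (α := ℝ)]

lemma Spa_div_Spa_le (hδ₀ : -(m : ℝ) < δ₀) (hδ₁ : -(m : ℝ) < δ₁) (hj : j ≤ 2 * m)
    (hk : 2 < (k : ℝ)) :
    Spa m k j δ₁ / Spa m k j δ₀ ≤ (k : ℝ) / (k - 2) * ((2 * m + δ₁) / (2 * m + δ₀)) := by
  rw [Spa_div_Spa_eq hδ₀ hδ₁, mul_comm]
  exact mul_le_mul_of_nonneg_right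
    (sub_div_sub_le_div_sub_two hk (sub_div_nonneg_of_le hδ₁ hj) (sub_div_le_two hδ₀))
    (div_nonneg (by linarith) (by linarith))

lemma le_Spa_div_Spa (hδ₀ : -(m : ℝ) < δ₀) (hδ₁ : -(m : ℝ) < δ₁) (hj : j ≤ 2 * m)
    (hk : 2 < (k : ℝ)) :
    ((k : ℝ) / (k - 2))⁻¹ * ((2 * m + δ₁) / (2 * m + δ₀)) ≤ Spa m k j δ₁ / Spa m k j δ₀ := by
  rw [Spa_div_Spa_eq hδ₀ hδ₁, inv_div, mul_comm (_ / _)]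
  exact mul_le_mul_of_nonneg_left
    (sub_two_div_le_sub_div_sub hk (sub_div_le_two hδ₁) (sub_div_nonneg_of_le hδ₀ hj)
      (sub_div_le_two hδ₀))
    (div_nonneg (by linarith) (by linarith))

end

theorem prod_S_ratio_single_bounds_general (m : ℕ) (δ₀ δ₁ : ℝ)
    (hδ₀ : -(m : ℝ) < δ₀) (hδ₁ : -(m : ℝ) < δ₁)
    (τ' k : ℕ) (hτ' : 3 ≤ τ') (hτ'k : τ' < k) :
    Real.exp (-(6 * m : ℝ) / τ') * ((2 * m + δ₁) / (2 * m + δ₀)) ^ m ≤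
      (∏ i ∈ Finset.Icc 1 m, Spa m k (i - 1) δ₁ / Spa m k (i - 1) δ₀) ∧
    (∏ i ∈ Finset.Icc 1 m, Spa m k (i - 1) δ₁ / Spa m k (i - 1) δ₀) ≤
      Real.exp ((6 * m : ℝ) / τ') * ((2 * m + δ₁) / (2 * m + δ₀)) ^ m := by
  have hτ : (3 : ℝ) ≤ τ' := by exact_mod_cast hτ'
  have hkτ : (τ' : ℝ) + 1 ≤ k := by exact_mod_cast hτ'k
  have hk : 2 < (k : ℝ) := by linarith
  have hρ : (k : ℝ) / (k - 2) ≤ exp (6 / τ') := div_sub_two_le_exp (by linarith) hkτ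
  have hρ₀ : (0 : ℝ) < (k : ℝ) / (k - 2) := div_pos (by linarith) (by linarith)
  have hr₀ : (0 : ℝ) ≤ (2 * m + δ₁) / (2 * m + δ₀) := div_nonneg (by linarith) (by linarith)
  have hj : ∀ i ∈ Icc 1 m, i - 1 ≤ 2 * m := fun i hi => by grind
  have hexp (s : ℝ) : exp (s * m / τ') = exp (s / τ') ^ m := by
    rw [← exp_nat_mul]; ring_nf
  constructor
  · calc exp (-(6 * m : ℝ) / τ') * ((2 * m + δ₁) / (2 * m + δ₀)) ^ m
        = ((exp (6 / τ'))⁻¹ * ((2 * m + δ₁) / (2 * m + δ₀))) ^ m := by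
          rw [mul_pow, inv_pow, ← hexp, ← exp_neg]; ring_nf
      _ ≤ (((k : ℝ) / (k - 2))⁻¹ * ((2 * m + δ₁) / (2 * m + δ₀))) ^ m := by gcongr
      _ = ∏ _i ∈ Icc 1 m, ((k : ℝ) / (k - 2))⁻¹ * ((2 * m + δ₁) / (2 * m + δ₀)) := by simp
      _ ≤ _ := prod_le_prod (fun _ _ => by positivity)
          fun i hi => le_Spa_div_Spa hδ₀ hδ₁ (hj i hi) hk
  · calc ∏ i ∈ Icc 1 m, Spa m k (i - 1) δ₁ / Spa m k (i - 1) δ₀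
        ≤ ∏ _i ∈ Icc 1 m, (k : ℝ) / (k - 2) * ((2 * m + δ₁) / (2 * m + δ₀)) :=
          prod_le_prod (fun i hi => (mul_nonneg (inv_nonneg.2 hρ₀.le) hr₀).trans
            (le_Spa_div_Spa hδ₀ hδ₁ (hj i hi) hk))
          fun i hi => Spa_div_Spa_le hδ₀ hδ₁ (hj i hi) hk
      _ = ((k : ℝ) / (k - 2) * ((2 * m + δ₁) / (2 * m + δ₀))) ^ m := by simp
      _ ≤ exp ((6 * m : ℝ) / τ') * ((2 * m + δ₁) / (2 * m + δ₀)) ^ m := by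
          rw [hexp, ← mul_pow]; gcongr

theorem prod_S_ratio_single_bounds (m : ℕ) (hm : 1 ≤ m) (δ₀ δ₁ : ℝ)
    (hδ₀ : -(m : ℝ) < δ₀) (hδ₁ : -(m : ℝ) < δ₁)
    (τ' k : ℕ) (hτ' : 3 ≤ τ') (hτ'k : τ' < k) :
    Real.exp (-(6 * m : ℝ) / τ') * ((2 * m + δ₁) / (2 * m + δ₀)) ^ m ≤
      (∏ i ∈ Finset.Icc 1 m, Spa m k (i - 1) δ₁ / Spa m k (i - 1) δ₀) ∧
    (∏ i ∈ Finset.Icc 1 m, Spa m k (i - 1) δ₁ / Spa m k (i - 1) δ₀) ≤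
      Real.exp ((6 * m : ℝ) / τ') * ((2 * m + δ₁) / (2 * m + δ₀)) ^ m :=
  prod_S_ratio_single_bounds_general m δ₀ δ₁ hδ₀ hδ₁ τ' k hτ' hτ'k
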